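/- Let α > 0, β > 0, let v ∈ ℝ, and let s be a real number with s > |v|^{1/α}. Then the Laplace transform of t ↦ t^{β−1} E_{α,β}(v t^α) is given by ∫_0^∞ e^{−s t} · t^{β−1} · E_{α,β}(v t^α) dt = s^{α−β} / (s^α − v). -/

import Mathlib

open MeasureTheory Real Set

/-- Two-parameter Mittag–Leffler function (real argument):
`E_{α,β}(x) = ∑_{k=0}^∞ x^k / Γ(kα + β)`. -/
noncomputable def mittagLeffler2 (α β x : ℝ) : ℝ :=
  ∑' k : ℕ, x ^ k / Real.Gamma (k * α + β)

/-- Laplace transform of the two-parameter Mittag–Leffler function: for `α, β > 0`,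
`v ∈ ℝ`, and `s > |v|^{1/α}`,
`∫_0^∞ e^{−s t} t^{β−1} E_{α,β}(v t^α) dt = s^{α−β} / (s^α − v)`. -/
theorem laplace_mittagLeffler2
    {α β v s : ℝ} (hα : 0 < α) (hβ : 0 < β) (hs : |v| ^ (1 / α) < s) :
    ∫ t in Set.Ioi (0 : ℝ),
        Real.exp (-(s * t)) * t ^ (β - 1) * mittagLeffler2 α β (v * t ^ α) =
      s ^ (α - β) / (s ^ α - v) := by
  have hs0 : 0 < s := lt_of_le_of_lt (Real.rpow_nonneg (abs_nonneg v) _) hs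
  have hvs : |v| < s ^ α := by
    have := Real.rpow_lt_rpow (Real.rpow_nonneg (abs_nonneg v) _) hs hα
    rwa [← Real.rpow_mul (abs_nonneg v), one_div, inv_mul_cancel₀ hα.ne',
      Real.rpow_one] at this
  have hsαpos : (0 : ℝ) < s ^ α := Real.rpow_pos_of_pos hs0 _
  have hsβpos : (0 : ℝ) < s ^ β := Real.rpow_pos_of_pos hs0 _
  have hden : 0 < s ^ α - v := by
    have : v ≤ |v| := le_abs_self v
    linarith
  have hc : ∀ k : ℕ, 0 < (k : ℝ) * α + β := fun k => by positivity
  set G : ℕ → ℝ → ℝ := fun k t =>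
    (v ^ k / Real.Gamma ((k : ℝ) * α + β)) * (t ^ ((k : ℝ) * α + β - 1) * Real.exp (-(s * t)))
    with hG
  -- integrability of each term
  have hint : ∀ k : ℕ, IntegrableOn (G k) (Ioi 0) := by
    intro k
    apply Integrable.const_mul
    have := integrableOn_rpow_mul_exp_neg_mul_rpow
      (show (-1 : ℝ) < (k : ℝ) * α + β - 1 by linarith [hc k]) one_pos hs0
    refine this.congr_fun (fun t ht => ?_) measurableSet_Ioi
    dsimp only
    rw [Real.rpow_one, neg_mul]
  -- value of each term's integral
  have hval : ∀ k : ℕ, ∫ t in Ioi (0 : ℝ), G k t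
      = (v ^ k / Real.Gamma ((k : ℝ) * α + β)) *
        ((1 / s) ^ ((k : ℝ) * α + β) * Real.Gamma ((k : ℝ) * α + β)) := by
    intro k
    rw [hG]
    rw [MeasureTheory.integral_const_mul, Real.integral_rpow_mul_exp_neg_mul_Ioi (hc k) hs0]
  have hpow : ∀ k : ℕ, ((1 / s : ℝ)) ^ ((k : ℝ) * α + β)
      = ((1 / s) ^ α) ^ k * (1 / s) ^ β := by
    intro k
    rw [Real.rpow_add (by positivity), ← Real.rpow_natCast ((1 / s) ^ α) k,
      ← Real.rpow_mul (by positivity), mul_comm α (k : ℝ)]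
  -- value of each term's norm integral
  have hnval : ∀ k : ℕ, ∫ t in Ioi (0 : ℝ), ‖G k t‖
      = |v| ^ k * ((1 / s) ^ ((k : ℝ) * α + β)) := by
    intro k
    have hΓ : 0 < Real.Gamma ((k : ℝ) * α + β) := Real.Gamma_pos_of_pos (hc k)
    have h1 : ∀ t ∈ Ioi (0 : ℝ), ‖G k t‖
        = (|v| ^ k / Real.Gamma ((k : ℝ) * α + β)) *
          (t ^ ((k : ℝ) * α + β - 1) * Real.exp (-(s * t))) := by
      intro t ht
      rw [hG]
      simp only [norm_mul, Real.norm_eq_abs, abs_div, abs_pow, abs_of_pos hΓ,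
        abs_of_pos (Real.rpow_pos_of_pos ht _), abs_of_pos (Real.exp_pos _)]
    rw [setIntegral_congr_fun measurableSet_Ioi h1, MeasureTheory.integral_const_mul,
      Real.integral_rpow_mul_exp_neg_mul_Ioi (hc k) hs0]
    field_simp
  -- summability of norm integrals
  have hq : |v| * (1 / s) ^ α < 1 := by
    rw [one_div, Real.inv_rpow hs0.le, mul_inv_lt_iff₀ hsαpos, one_mul]
    exact hvs
  have hqsum : Summable (fun k : ℕ => (|v| * (1 / s) ^ α) ^ k) :=
    summable_geometric_of_lt_one (by positivity) hq
  have hsum : Summable (fun k : ℕ => ∫ t in Ioi (0 : ℝ), ‖G k t‖) := by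
    apply Summable.congr (hqsum.mul_right ((1 / s) ^ β))
    intro k
    rw [hnval k, hpow k, mul_pow]
    ring
  -- swap sum and integral
  have hswap := MeasureTheory.integral_tsum_of_summable_integral_norm hint hsum
  have hcongr : ∫ t in Ioi (0 : ℝ),
      Real.exp (-(s * t)) * t ^ (β - 1) * mittagLeffler2 α β (v * t ^ α)
      = ∫ t in Ioi (0 : ℝ), ∑' k : ℕ, G k t := by
    refine setIntegral_congr_fun measurableSet_Ioi (fun t ht => ?_)
    rw [mittagLeffler2, ← tsum_mul_left]
    refine tsum_congr fun k => ?_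
    have ht : (0 : ℝ) < t := ht
    simp only [hG]
    rw [mul_pow, ← Real.rpow_natCast (t ^ α) k, ← Real.rpow_mul ht.le]
    have h2 : ((k : ℝ) * α + β - 1) = α * (k : ℝ) + (β - 1) := by ring
    rw [h2, Real.rpow_add ht]
    have hΓ : Real.Gamma ((k : ℝ) * α + β) ≠ 0 := (Real.Gamma_pos_of_pos (hc k)).ne'
    field_simp
  rw [hcongr, ← hswap]
  -- evaluate the sum
  have hterm : ∀ k : ℕ, ∫ t in Ioi (0 : ℝ), G k t
      = (v * (1 / s) ^ α) ^ k * (1 / s) ^ β := by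
    intro k
    have hΓ : Real.Gamma ((k : ℝ) * α + β) ≠ 0 := (Real.Gamma_pos_of_pos (hc k)).ne'
    rw [hval k, hpow k, mul_pow]
    field_simp
  have hr : ‖v * (1 / s) ^ α‖ < 1 := by
    rw [Real.norm_eq_abs, abs_mul, abs_of_pos (by positivity : (0:ℝ) < (1 / s) ^ α)]
    exact hq
  calc ∑' k : ℕ, ∫ t in Ioi (0 : ℝ), G k t
      = ∑' k : ℕ, (v * (1 / s) ^ α) ^ k * (1 / s) ^ β := tsum_congr hterm
    _ = (1 - v * (1 / s) ^ α)⁻¹ * (1 / s) ^ β := by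
        rw [tsum_mul_right, tsum_geometric_of_norm_lt_one hr]
    _ = s ^ (α - β) / (s ^ α - v) := by
        have h3 : (1 : ℝ) - v * (1 / s) ^ α = (s ^ α - v) / s ^ α := by
          rw [one_div, Real.inv_rpow hs0.le, eq_div_iff hsαpos.ne', sub_mul, one_mul,
            mul_assoc, inv_mul_cancel₀ hsαpos.ne', mul_one]
        rw [h3, inv_div, Real.rpow_sub hs0, one_div, Real.inv_rpow hs0.le,
          div_mul_eq_mul_div, div_eq_mul_inv (s ^ α) (s ^ β)]
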